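/- Let B be an open subset of the hyperplane P, let v ∈ ℝ^{d+1} have nonnegative coordinates, ‖v‖₁ = 1, and coordinates linearly independent over ℚ, let u : ℕ → A be an infinite word, and let a ∈ A. Set R_b = closure of π_v(W_b(u)) for each b ∈ A and R = closure of π_v(W(u)). Then the following are equivalent: (1) ℍ ∩ π_v^{-1}(B) ⊆ W_a(u); (2) for all b ∈ A with b ≠ a, B ∩ R_b = ∅, and for all t ∈ Λ with t ≠ 0, B ∩ (R + t) = ∅. -/
import Mathlib


/-- The abelianization (letter-count vector) of a finite word, viewed in `ℝ^{d+1}`. -/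
def abR {d : ℕ} (w : List (Fin (d + 1))) : Fin (d + 1) → ℝ :=
  fun a => (w.count a : ℝ)

/-- The worm of an infinite word: the abelianizations of its finite prefixes. -/
def worm {d : ℕ} (u : ℕ → Fin (d + 1)) : Set (Fin (d + 1) → ℝ) :=
  {w | ∃ n : ℕ, w = abR ((List.range n).map u)}

/-- `W_a(u)`: the abelianizations of the prefixes `p` of `u` such that `pa` is also
a prefix of `u`. -/
def wormA {d : ℕ} (u : ℕ → Fin (d + 1)) (a : Fin (d + 1)) : Set (Fin (d + 1) → ℝ) :=
  {w | ∃ n : ℕ, u n = a ∧ w = abR ((List.range n).map u)}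

/-- The integer half-space `ℍ = {z ∈ ℤ^{d+1} | h(z) ≥ 0}`, viewed inside `ℝ^{d+1}`. -/
def HH (d : ℕ) : Set (Fin (d + 1) → ℝ) :=
  {z | (∀ i, ∃ m : ℤ, z i = (m : ℝ)) ∧ 0 ≤ ∑ i, z i}

/-- The hyperplane `P = {z ∈ ℝ^{d+1} | h(z) = 0}`. -/
def Pset (d : ℕ) : Set (Fin (d + 1) → ℝ) :=
  {z | ∑ i, z i = 0}

/-- The lattice `Λ = P ∩ ℤ^{d+1}`, viewed inside `ℝ^{d+1}`. -/
def Lambda (d : ℕ) : Set (Fin (d + 1) → ℝ) :=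
  {z | (∀ i, ∃ m : ℤ, z i = (m : ℝ)) ∧ ∑ i, z i = 0}

/-- `piProj y z = z - (h(z)/h(y)) • y`, the projection of `ℝ^{d+1}` onto `P` along `y`. -/
noncomputable def piProj {d : ℕ} (y z : Fin (d + 1) → ℝ) : Fin (d + 1) → ℝ :=
  z - ((∑ i, z i) / (∑ i, y i)) • y

/-- The sum of the coordinates of `abR w` is the length of `w`. -/
lemma abR_sum {d : ℕ} (w : List (Fin (d + 1))) :
    ∑ i, abR w i = w.length := by
  unfold abR
  induction w with
  | nil => simp
  | cons x l ih =>
    simp only [List.count_cons, Nat.cast_add, List.length_cons]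
    rw [Finset.sum_add_distrib, ih]
    push_cast
    congr 1
    have : ∀ y : Fin (d+1), (if (x == y) = true then (1:ℝ) else 0) = if y = x then 1 else 0 := by
      intro y
      simp only [beq_iff_eq]
      by_cases h : y = x
      · subst h; simp
      · rw [if_neg (fun hxy => h hxy.symm), if_neg h]
    rw [Finset.sum_congr rfl (fun y _ => this y), Finset.sum_ite_eq' Finset.univ x (fun _ => (1:ℝ))]
    simp

lemma abR_prefix_sum {d : ℕ} (u : ℕ → Fin (d + 1)) (n : ℕ) :
    ∑ i, abR ((List.range n).map u) i = n := by
  rw [abR_sum]; simp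

/-- Characterization of the interior of `W_a(u)`: for an open subset `B` of `P` and a
totally irrational nonnegative unit vector `v`, `ℍ ∩ π_v⁻¹(B) ⊆ W_a(u)` if and only if
`B` avoids the pieces `R_b` (`b ≠ a`) and all nonzero `Λ`-translates of `R`. -/
theorem interior_characterization {d : ℕ} (hd : 1 ≤ d)
    (B : Set (Fin (d + 1) → ℝ)) (hBP : B ⊆ Pset d)
    (hBopen : IsOpen (Subtype.val ⁻¹' B : Set (Pset d)))
    (v : Fin (d + 1) → ℝ) (hv : ∀ i, 0 ≤ v i) (hv1 : (∑ i, |v i|) = 1)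
    (hirr : LinearIndependent ℚ v)
    (u : ℕ → Fin (d + 1)) (a : Fin (d + 1)) :
    (∀ z ∈ HH d, piProj v z ∈ B → z ∈ wormA u a) ↔
      ((∀ b : Fin (d + 1), b ≠ a → B ∩ closure (piProj v '' wormA u b) = ∅) ∧
       (∀ t ∈ Lambda d, t ≠ 0 →
         B ∩ ((fun z => z + t) '' closure (piProj v '' worm u)) = ∅)) := by
  -- sum of v is 1
  have hv1' : (∑ i, v i) = 1 := by
    rw [← hv1]
    exact Finset.sum_congr rfl (fun i _ => (abs_of_nonneg (hv i)).symm)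
  -- explicit form of piProj
  have hπ : ∀ z : Fin (d+1) → ℝ, piProj v z = z - (∑ i, z i) • v := by
    intro z; unfold piProj; rw [hv1', div_one]
  -- piProj lands in the hyperplane
  have hπP : ∀ z : Fin (d+1) → ℝ, piProj v z ∈ Pset d := by
    intro z
    show ∑ i, piProj v z i = 0
    simp only [hπ, Pi.sub_apply, Pi.smul_apply, smul_eq_mul]
    rw [Finset.sum_sub_distrib, ← Finset.mul_sum, hv1', mul_one, sub_self]
  -- piProj commutes with translation by a hyperplane vector
  have hπadd : ∀ z t : Fin (d+1) → ℝ, (∑ i, t i) = 0 →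
      piProj v (z + t) = piProj v z + t := by
    intro z t ht
    simp only [hπ]
    have : ∑ i, (z + t) i = ∑ i, z i := by
      simp only [Pi.add_apply]
      rw [Finset.sum_add_distrib, ht, add_zero]
    rw [this]
    abel
  -- extract an open ambient set U with B = U ∩ P
  obtain ⟨U, hUopen, hU⟩ := isOpen_induced_iff.mp hBopen
  have hBU : ∀ x, x ∈ Pset d → (x ∈ B ↔ x ∈ U) := by
    intro x hx
    have := Set.ext_iff.mp hU ⟨x, hx⟩
    exact this.symm
  constructor
  · -- forward direction
    intro hL
    constructor
    · intro b hb
      by_contra hne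
      obtain ⟨x, hxB, hxcl⟩ := Set.nonempty_iff_ne_empty.mpr hne
      have hxU : x ∈ U := (hBU x (hBP hxB)).mp hxB
      obtain ⟨y, hyU, w, hw, hwy⟩ := mem_closure_iff.mp hxcl U hUopen hxU
      obtain ⟨n, hun, hwn⟩ := hw
      -- y = piProj v w ∈ B
      have hyP : y ∈ Pset d := hwy ▸ hπP w
      have hyB : y ∈ B := (hBU y hyP).mpr hyU
      -- w ∈ HH
      have hwH : w ∈ HH d := by
        constructor
        · intro i; exact ⟨(((List.range n).map u).count i : ℤ), by simp [hwn, abR]⟩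
        · rw [hwn, abR_prefix_sum]; positivity
      have hwa : w ∈ wormA u a := hL w hwH (hwy ▸ hyB)
      obtain ⟨m, hum, hwm⟩ := hwa
      have hnm : (n : ℝ) = m := by
        rw [← abR_prefix_sum u n, ← abR_prefix_sum u m, ← hwn, ← hwm]
      have : n = m := Nat.cast_injective hnm
      subst this; rw [← hun, ← hum] at hb; exact hb rfl
    · intro t ht ht0
      by_contra hne
      obtain ⟨x, hxB, hxtr⟩ := Set.nonempty_iff_ne_empty.mpr hne
      obtain ⟨y, hycl, hyx⟩ := hxtr
      have hxU : x ∈ U := (hBU x (hBP hxB)).mp hxB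
      -- the open set U translated by -t
      have hU'open : IsOpen ((fun z => z + t) ⁻¹' U) :=
        hUopen.preimage (continuous_id.add continuous_const)
      have hyU' : y ∈ (fun z => z + t) ⁻¹' U := by
        show y + t ∈ U
        have : y + t = x := hyx
        rw [this]; exact hxU
      obtain ⟨p, hpU', w, hw, hwp⟩ := mem_closure_iff.mp hycl _ hU'open hyU'
      obtain ⟨n, hwn⟩ := hw
      -- consider w + t ∈ HH
      have hwtH : w + t ∈ HH d := by
        constructor
        · intro i
          obtain ⟨mi, hmi⟩ := ht.1 i
          exact ⟨(((List.range n).map u).count i : ℤ) + mi, by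
            simp [hwn, abR, hmi]⟩
        · have : ∑ i, (w + t) i = ∑ i, w i + ∑ i, t i := by
            simp only [Pi.add_apply]; rw [Finset.sum_add_distrib]
          rw [this, ht.2, add_zero, hwn, abR_prefix_sum]; positivity
      have hπwt : piProj v (w + t) = p + t := by rw [hπadd w t ht.2, hwp]
      have hptP : p + t ∈ Pset d := hπwt ▸ hπP (w + t)
      have hptB : p + t ∈ B := (hBU _ hptP).mpr hpU'
      have hwta : w + t ∈ wormA u a := hL (w + t) hwtH (hπwt ▸ hptB)
      obtain ⟨m, hum, hwm⟩ := hwta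
      have hsum_wt : ∑ i, (w + t) i = n := by
        have : ∑ i, (w + t) i = ∑ i, w i + ∑ i, t i := by
          simp only [Pi.add_apply]; rw [Finset.sum_add_distrib]
        rw [this, ht.2, add_zero, hwn, abR_prefix_sum]
      have hnm : (n : ℝ) = m := by
        rw [← hsum_wt, hwm, abR_prefix_sum]
      have hnm' : n = m := Nat.cast_injective hnm
      have : w + t = w := by rw [hwm, ← hnm', ← hwn]
      exact ht0 (by
        have := congrArg (fun q => q - w) this
        simpa using this)
  · -- backward direction
    rintro ⟨h1, h2⟩ z hz hπz
    -- the sum of z's coordinates is a nonneg integer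
    obtain ⟨hzint, hzsum⟩ := hz
    have : ∃ N : ℤ, (∑ i, z i) = (N : ℝ) := by
      choose m hm using hzint
      exact ⟨∑ i, m i, by rw [Finset.sum_congr rfl (fun i _ => hm i)]; push_cast; rfl⟩
    obtain ⟨N, hN⟩ := this
    have hN0 : 0 ≤ N := by exact_mod_cast hN ▸ hzsum
    set n : ℕ := N.toNat with hn
    have hNn : (N : ℝ) = (n : ℝ) := by
      rw [hn]; norm_cast; omega
    set w : Fin (d+1) → ℝ := abR ((List.range n).map u) with hw
    set t : Fin (d+1) → ℝ := z - w with htdef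
    have htsum : ∑ i, t i = 0 := by
      have : ∑ i, t i = ∑ i, z i - ∑ i, w i := by
        simp only [htdef, Pi.sub_apply]; rw [Finset.sum_sub_distrib]
      rw [this, hN, hNn, hw, abR_prefix_sum, sub_self]
    have htL : t ∈ Lambda d := by
      constructor
      · intro i
        obtain ⟨mi, hmi⟩ := hzint i
        exact ⟨mi - (((List.range n).map u).count i : ℤ), by
          simp [htdef, hw, abR, hmi]⟩
      · exact htsum
    have hzwt : z = w + t := by simp [htdef]
    -- t must be zero
    have ht0 : t = 0 := by
      by_contra ht0
      have := h2 t htL ht0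
      have hmem : piProj v z ∈ B ∩ ((fun q => q + t) '' closure (piProj v '' worm u)) := by
        refine ⟨hπz, piProj v w, subset_closure ⟨w, ⟨n, rfl⟩, rfl⟩, ?_⟩
        show piProj v w + t = piProj v z
        rw [← hπadd w t htsum, ← hzwt]
      rw [this] at hmem
      exact hmem
    have hzw : z = w := by rw [hzwt, ht0, add_zero]
    -- now u n must equal a
    by_cases hb : u n = a
    · exact ⟨n, hb, hzw⟩
    · exfalso
      have := h1 (u n) hb
      have hmem : piProj v z ∈ B ∩ closure (piProj v '' wormA u (u n)) := by
        refine ⟨hπz, subset_closure ⟨z, ⟨n, rfl, hzw⟩, rfl⟩⟩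
      rw [this] at hmem
      exact hmem
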